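/- Syntactic equivalence on referred entries preserves extended rt-reduction: if T₁ takes one extended rt-step to T₂ in L₁, and L₁ and L₂ agree syntactically on the entries recursively referred by T₁, then T₁ takes one extended rt-step to T₂ in L₂ as well. -/
import Mathlib


/-- Terms of λδ. -/
inductive Tm (S V : Type) : Type
  | sort (s : S)
  | var (x : V)
  | app (v t : Tm S V)
  | abst (x : V) (w t : Tm S V)
  | abbr (x : V) (v t : Tm S V)
  | cast (u t : Tm S V)

/-- Environment entries: declarations and definitions. -/
inductive Entry (S V : Type) : Type
  | decl (x : V) (w : Tm S V)
  | defn (x : V) (v : Tm S V)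

/-- Environments: lists of entries (head = most recent entry). -/
abbrev Env (S V : Type) := List (Entry S V)

namespace Entry
variable {S V : Type}
def name : Entry S V → V
  | .decl x _ => x
  | .defn x _ => x
def body : Entry S V → Tm S V
  | .decl _ w => w
  | .defn _ v => v
end Entry

namespace Tm
variable {S V : Type}

/-- Free variables of a term. -/
def fv [DecidableEq V] : Tm S V → Finset V
  | .sort _ => ∅
  | .var x => {x}
  | .app v t => v.fv ∪ t.fv
  | .abst x w t => w.fv ∪ (t.fv \ {x})
  | .abbr x v t => v.fv ∪ (t.fv \ {x})
  | .cast u t => u.fv ∪ t.fv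

/-- Number of constructors of a term. -/
def size : Tm S V → ℕ
  | .sort _ => 1
  | .var _ => 1
  | .app v t => v.size + t.size + 1
  | .abst _ w t => w.size + t.size + 1
  | .abbr _ v t => v.size + t.size + 1
  | .cast u t => u.size + t.size + 1

theorem size_pos (t : Tm S V) : 0 < t.size := by
  cases t <;> simp [size]

end Tm

def Entry.size {S V : Type} (e : Entry S V) : ℕ := e.body.size

def Env.size {S V : Type} (L : Env S V) : ℕ := (L.map Entry.size).sum

variable {S V : Type}

/-- Direct subclosure (one s-step): ⟨L₁,T₁⟩ ≻ ⟨L₂,T₂⟩. -/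
inductive Fqu [DecidableEq V] : Env S V → Tm S V → Env S V → Tm S V → Prop
  | var (e : Entry S V) (K : Env S V) : Fqu (e :: K) (.var e.name) K e.body
  | drop (e : Entry S V) {K : Env S V} {T : Tm S V} :
      e.name ∉ T.fv → Fqu (e :: K) T K T
  | appL : Fqu L (.app v t) L v
  | appR : Fqu L (.app v t) L t
  | castL : Fqu L (.cast u t) L u
  | castR : Fqu L (.cast u t) L t
  | abstL : Fqu L (.abst x w t) L w
  | abstR : Fqu L (.abst x w t) (Entry.decl x w :: L) t
  | abbrL : Fqu L (.abbr x v t) L v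
  | abbrR : Fqu L (.abbr x v t) (Entry.defn x v :: L) t
/-- Sort irrelevance for terms. -/
inductive Teqx : Tm S V → Tm S V → Prop
  | sort (s₁ s₂ : S) : Teqx (.sort s₁) (.sort s₂)
  | var (x : V) : Teqx (.var x) (.var x)
  | app : Teqx v₁ v₂ → Teqx t₁ t₂ → Teqx (.app v₁ t₁) (.app v₂ t₂)
  | abst : Teqx w₁ w₂ → Teqx t₁ t₂ → Teqx (.abst x w₁ t₁) (.abst x w₂ t₂)
  | abbr : Teqx v₁ v₂ → Teqx t₁ t₂ → Teqx (.abbr x v₁ t₁) (.abbr x v₂ t₂)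
  | cast : Teqx u₁ u₂ → Teqx t₁ t₂ → Teqx (.cast u₁ t₁) (.cast u₂ t₂)

/-- Same top constructor (equivalence for inner rt-reduction). -/
inductive Teqo : Tm S V → Tm S V → Prop
  | sort (s₁ s₂ : S) : Teqo (.sort s₁) (.sort s₂)
  | var (x : V) : Teqo (.var x) (.var x)
  | app (v₁ t₁ v₂ t₂ : Tm S V) : Teqo (.app v₁ t₁) (.app v₂ t₂)
  | abst (x₁ : V) (w₁ t₁ : Tm S V) (x₂ : V) (w₂ t₂ : Tm S V) :
      Teqo (.abst x₁ w₁ t₁) (.abst x₂ w₂ t₂)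
  | abbr (x₁ : V) (v₁ t₁ : Tm S V) (x₂ : V) (v₂ t₂ : Tm S V) :
      Teqo (.abbr x₁ v₁ t₁) (.abbr x₂ v₂ t₂)
  | cast (u₁ t₁ u₂ t₂ : Tm S V) : Teqo (.cast u₁ t₁) (.cast u₂ t₂)

/-- Arities: simple types over one base type. -/
inductive Arity : Type
  | star : Arity
  | arr (b a : Arity) : Arity
deriving DecidableEq

/-- Arity assignment L ⊢ T : A. -/
inductive Aaa : Env S V → Tm S V → Arity → Prop
  | sort (L : Env S V) (s : S) : Aaa L (.sort s) .star
  | var (e : Entry S V) : Aaa K e.body a → Aaa (e :: K) (.var e.name) a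
  | weak (e : Entry S V) : e.name ≠ x → Aaa K (.var x) a → Aaa (e :: K) (.var x) a
  | abst : Aaa L w b → Aaa (Entry.decl x w :: L) t a → Aaa L (.abst x w t) (.arr b a)
  | abbr : Aaa L v b → Aaa (Entry.defn x v :: L) t a → Aaa L (.abbr x v t) a
  | app : Aaa L v b → Aaa L t (.arr b a) → Aaa L (.app v t) a
  | cast : Aaa L u a → Aaa L t a → Aaa L (.cast u t) a

/-- Refinement for preservation of arity. -/
inductive LsubA : Env S V → Env S V → Prop
  | nil : LsubA [] []
  | bind (e : Entry S V) : LsubA K₁ K₂ → LsubA (e :: K₁) (e :: K₂)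
  | beta : LsubA K₁ K₂ → Aaa K₁ (.cast w v) b → Aaa K₂ w b →
      LsubA (Entry.defn y (.cast w v) :: K₁) (Entry.decl y w :: K₂)

/-- One extended rt-reduction step L ⊢ T₁ ⇒ T₂. -/
inductive Cpx [DecidableEq V] : Env S V → Tm S V → Tm S V → Prop
  | beta : Cpx L (.app v (.abst x w t)) (.abbr x (.cast w v) t)
  | theta : Cpx L (.app v (.abbr x w t)) (.abbr x w (.app v t))
  | delta (e : Entry S V) (K : Env S V) : Cpx (e :: K) (.var e.name) e.body
  | zeta : x ∉ Tm.fv t → Cpx L (.abbr x v t) t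
  | eps : Cpx L (.cast u t) t
  | ee : Cpx L (.cast u t) u
  | ss (s₁ s₂ : S) : Cpx L (.sort s₁) (.sort s₂)
  | lift (e : Entry S V) : e.name ≠ x → e.name ∉ Tm.fv t →
      Cpx K (.var x) t → Cpx (e :: K) (.var x) t
  | appL : Cpx L v₁ v₂ → Cpx L (.app v₁ t) (.app v₂ t)
  | appR : Cpx L t₁ t₂ → Cpx L (.app v t₁) (.app v t₂)
  | abstL : Cpx L w₁ w₂ → Cpx L (.abst x w₁ t) (.abst x w₂ t)
  | abstR : Cpx (Entry.decl x w :: L) t₁ t₂ → Cpx L (.abst x w t₁) (.abst x w t₂)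
  | abbrL : Cpx L v₁ v₂ → Cpx L (.abbr x v₁ t) (.abbr x v₂ t)
  | abbrR : Cpx (Entry.defn x v :: L) t₁ t₂ → Cpx L (.abbr x v t₁) (.abbr x v t₂)
  | castL : Cpx L u₁ u₂ → Cpx L (.cast u₁ t) (.cast u₂ t)
  | castR : Cpx L t₁ t₂ → Cpx L (.cast u t₁) (.cast u t₂)

/-- Extended rt-reduction for terms (sequence of steps). -/
def Cpxs [DecidableEq V] (L : Env S V) : Tm S V → Tm S V → Prop :=
  Relation.ReflTransGen (Cpx L)

/-- One entrywise extended rt-reduction step for environments. -/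
inductive Lpx [DecidableEq V] : Env S V → Env S V → Prop
  | bind (e : Entry S V) : Lpx K₁ K₂ → Lpx (e :: K₁) (e :: K₂)
  | decl : Cpx K v₁ v₂ → Lpx (Entry.decl y v₁ :: K) (Entry.decl y v₂ :: K)
  | defn : Cpx K v₁ v₂ → Lpx (Entry.defn y v₁ :: K) (Entry.defn y v₂ :: K)

/-- Entrywise extended rt-reduction for environments (sequence of steps). -/
def Lpxs [DecidableEq V] : Env S V → Env S V → Prop :=
  Relation.ReflTransGen (Lpx (S := S) (V := V))
/-- One step of bound rt-reduction L ⊢ T₁ →[n] T₂ (n counts type-inference steps). -/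
inductive Cpm [DecidableEq V] (next : S → S) : ℕ → Env S V → Tm S V → Tm S V → Prop
  | beta : Cpm next 0 L (.app v (.abst x w t)) (.abbr x (.cast w v) t)
  | delta : Cpm next 0 (Entry.defn x v :: K) (.var x) v
  | zeta : x ∉ Tm.fv t → Cpm next 0 L (.abbr x v t) t
  | theta : Cpm next 0 L (.app v (.abbr x w t)) (.abbr x w (.app v t))
  | eps : Cpm next 0 L (.cast u t) t
  | s (s₀ : S) : Cpm next 1 L (.sort s₀) (.sort (next s₀))
  | l : Cpm next 1 (Entry.decl x w :: K) (.var x) w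
  | e : Cpm next 1 L (.cast u t) u
  | lift (e : Entry S V) : e.name ≠ x → e.name ∉ Tm.fv t →
      Cpm next n K (.var x) t → Cpm next n (e :: K) (.var x) t
  | appL : Cpm next 0 L v₁ v₂ → Cpm next 0 L (.app v₁ t) (.app v₂ t)
  | appR : Cpm next n L t₁ t₂ → Cpm next n L (.app v t₁) (.app v t₂)
  | abstL : Cpm next 0 L w₁ w₂ → Cpm next 0 L (.abst x w₁ t) (.abst x w₂ t)
  | abstR : Cpm next n (Entry.decl x w :: L) t₁ t₂ →
      Cpm next n L (.abst x w t₁) (.abst x w t₂)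
  | abbrL : Cpm next 0 L v₁ v₂ → Cpm next 0 L (.abbr x v₁ t) (.abbr x v₂ t)
  | abbrR : Cpm next n (Entry.defn x v :: L) t₁ t₂ →
      Cpm next n L (.abbr x v t₁) (.abbr x v t₂)
  | castL : Cpm next 0 L u₁ u₂ → Cpm next 0 L (.cast u₁ t) (.cast u₂ t)
  | castR : Cpm next 0 L t₁ t₂ → Cpm next 0 L (.cast u t₁) (.cast u t₂)
  | castB : Cpm next 1 L u₁ u₂ → Cpm next 1 L t₁ t₂ →
      Cpm next 1 L (.cast u₁ t₁) (.cast u₂ t₂)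

/-- Bound rt-reduction (sequence of steps, bounds add). -/
inductive Cpms [DecidableEq V] (next : S → S) : ℕ → Env S V → Tm S V → Tm S V → Prop
  | refl (L : Env S V) (t : Tm S V) : Cpms next 0 L t t
  | single : Cpm next n L t₁ t₂ → Cpms next n L t₁ t₂
  | trans : Cpms next n₁ L t₁ t → Cpms next n₂ L t t₂ → Cpms next (n₁ + n₂) L t₁ t₂

/-- One entrywise r-reduction step for environments. -/
inductive Lpr [DecidableEq V] (next : S → S) : Env S V → Env S V → Prop
  | bind (e : Entry S V) : Lpr next K₁ K₂ → Lpr next (e :: K₁) (e :: K₂)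
  | decl : Cpm next 0 K v₁ v₂ → Lpr next (Entry.decl y v₁ :: K) (Entry.decl y v₂ :: K)
  | defn : Cpm next 0 K v₁ v₂ → Lpr next (Entry.defn y v₁ :: K) (Entry.defn y v₂ :: K)

/-- Refinement for the preservation of rt-reduction. -/
inductive LsubR : Env S V → Env S V → Prop
  | nil : LsubR [] []
  | bind (e : Entry S V) : LsubR K₁ K₂ → LsubR (e :: K₁) (e :: K₂)
  | beta : LsubR K₁ K₂ →
      LsubR (Entry.defn y (.cast w v) :: K₁) (Entry.decl y w :: K₂)

/-- Inherited free variables of a term in an environment. -/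
def FreeP [DecidableEq V] : Env S V → Tm S V → Finset V
  | _, .sort _ => ∅
  | [], .var x => {x}
  | e :: K, .var x =>
      if e.name = x then FreeP K e.body ∪ {x} else FreeP K (.var x)
  | L, .app v t => FreeP L v ∪ FreeP L t
  | L, .cast u t => FreeP L u ∪ FreeP L t
  | L, .abst x w t => FreeP L w ∪ (FreeP (Entry.decl x w :: L) t \ {x})
  | L, .abbr x v t => FreeP L v ∪ (FreeP (Entry.defn x v :: L) t \ {x})
termination_by L T => Env.size L + T.size
decreasing_by
  all_goals try have := Tm.size_pos (Entry.body e)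
  all_goals try cases e
  all_goals simp only [Env.size, Entry.size, Entry.body, Tm.size, List.map_cons,
    List.sum_cons] at *
  all_goals omega

/-- Syntactic equivalence of environments on a set of selected variables. -/
inductive Req [DecidableEq V] : Finset V → Env S V → Env S V → Prop
  | nil (f : Finset V) : Req f [] []
  | skipDecl : y ∉ f → Req f K₁ K₂ →
      Req f (Entry.decl y w₁ :: K₁) (Entry.decl y w₂ :: K₂)
  | skipDefn : y ∉ f → Req f K₁ K₂ →
      Req f (Entry.defn y v₁ :: K₁) (Entry.defn y v₂ :: K₂)
  | keep (e : Entry S V) : e.name ∉ f → Req f K₁ K₂ →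
      Req (f ∪ {e.name}) (e :: K₁) (e :: K₂)

/-- Syntactic equivalence of environments on the entries referred by a term. -/
def ReqT [DecidableEq V] (t : Tm S V) (L₁ L₂ : Env S V) : Prop :=
  Req (FreeP L₁ t) L₁ L₂

/-- Sort irrelevance of environments on a set of selected variables. -/
inductive Reqx [DecidableEq V] : Finset V → Env S V → Env S V → Prop
  | nil (f : Finset V) : Reqx f [] []
  | skipDecl : y ∉ f → Reqx f K₁ K₂ →
      Reqx f (Entry.decl y w₁ :: K₁) (Entry.decl y w₂ :: K₂)
  | skipDefn : y ∉ f → Reqx f K₁ K₂ →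
      Reqx f (Entry.defn y v₁ :: K₁) (Entry.defn y v₂ :: K₂)
  | keepDecl : y ∉ f → Reqx f K₁ K₂ → Teqx w₁ w₂ →
      Reqx (f ∪ {y}) (Entry.decl y w₁ :: K₁) (Entry.decl y w₂ :: K₂)
  | keepDefn : y ∉ f → Reqx f K₁ K₂ → Teqx v₁ v₂ →
      Reqx (f ∪ {y}) (Entry.defn y v₁ :: K₁) (Entry.defn y v₂ :: K₂)

/-- Sort irrelevance of environments on the entries referred by a term. -/
def ReqxT [DecidableEq V] (t : Tm S V) (L₁ L₂ : Env S V) : Prop :=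
  Reqx (FreeP L₁ t) L₁ L₂

/-- Strongly rt-normalizing terms (up to sort irrelevance). -/
inductive Csx [DecidableEq V] (L : Env S V) : Tm S V → Prop
  | intro : (∀ t₂, Cpx L t₁ t₂ → ¬ Teqx t₁ t₂ → Csx L t₂) → Csx L t₁

/-- Strongly qrt-normalizing environments with respect to a term. -/
inductive Rsx [DecidableEq V] (t : Tm S V) : Env S V → Prop
  | intro : (∀ L₂, Lpx L₁ L₂ → ¬ ReqxT t L₁ L₂ → Rsx t L₂) → Rsx t L₁

/-- One extended qrst-step on closures. -/
inductive Fpb [DecidableEq V] : Env S V → Tm S V → Env S V → Tm S V → Prop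
  | ex : Cpx L t₁ t₂ → Fpb L t₁ L t₂
  | lx : Lpx L₁ L₂ → Fpb L₁ t L₂ t
  | lq : ReqT t L₁ L₂ → Fpb L₁ t L₂ t
  | cs : Fqu L₁ t₁ L₂ t₂ → Fpb L₁ t₁ L₂ t₂

/-- n-ary application @V₁.…@Vₖ.T. -/
def appV (vs : List (Tm S V)) (t : Tm S V) : Tm S V := vs.foldr Tm.app t

/-- Parametric validity CNV_𝒜. -/
inductive Cnv [DecidableEq V] (next : S → S) (A : Set ℕ) : Env S V → Tm S V → Prop
  | sort (L : Env S V) (s : S) : Cnv next A L (.sort s)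
  | var (e : Entry S V) : Cnv next A K e.body → Cnv next A (e :: K) (.var e.name)
  | weak (e : Entry S V) : e.name ≠ x → Cnv next A K (.var x) →
      Cnv next A (e :: K) (.var x)
  | abst : Cnv next A L w → Cnv next A (Entry.decl x w :: L) t →
      Cnv next A L (.abst x w t)
  | abbr : Cnv next A L v → Cnv next A (Entry.defn x v :: L) t →
      Cnv next A L (.abbr x v t)
  | cast : Cnv next A L u → Cnv next A L t →
      Cpms next 1 L t u₀ → Cpms next 0 L u u₀ → Cnv next A L (.cast u t)
  | app : Cnv next A L v → Cnv next A L t → n ∈ A →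
      Cpms next n L t (.abst x w₀ u₀) → Cpms next 1 L v w₀ →
      Cnv next A L (.app v t)

/-- Type checking: L ⊢_𝒜 T : U means the annotation ⓝU.T is valid. -/
def Nta [DecidableEq V] (next : S → S) (A : Set ℕ)
    (L : Env S V) (t u : Tm S V) : Prop :=
  Cnv next A L (.cast u t)
/-- Antitone monotonicity of Req in the set of selected variables. -/
theorem req_mono [DecidableEq V] {f g : Finset V} {L₁ L₂ : Env S V}
    (h : Req f L₁ L₂) (hg : g ⊆ f) : Req g L₁ L₂ := by
  induction h generalizing g with
  | nil => exact .nil g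
  | skipDecl hy _ ih => exact .skipDecl (fun hm => hy (hg hm)) (ih hg)
  | skipDefn hy _ ih => exact .skipDefn (fun hm => hy (hg hm)) (ih hg)
  | @keep f' K₁ K₂ e hy _ ih =>
    by_cases hx : e.name ∈ g
    · have hsub : g \ {e.name} ⊆ f' := by
        intro a ha
        simp only [Finset.mem_sdiff, Finset.mem_singleton] at ha
        rcases Finset.mem_union.1 (hg ha.1) with h' | h'
        · exact h'
        · exact absurd (Finset.mem_singleton.1 h') ha.2
      have : (g \ {e.name}) ∪ {e.name} = g := by
        rw [Finset.sdiff_union_self_eq_union]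
        exact Finset.union_eq_left.2 (Finset.singleton_subset_iff.2 hx)
      rw [← this]
      exact .keep e (by simp) (ih hsub)
    · have hsub : g ⊆ f' := by
        intro a ha
        rcases Finset.mem_union.1 (hg ha) with h' | h'
        · exact h'
        · exact absurd (Finset.mem_singleton.1 h' ▸ ha) hx
      cases e with
      | decl y w => exact .skipDecl hx (ih hsub)
      | defn y v => exact .skipDefn hx (ih hsub)

theorem mem_freeP_var [DecidableEq V] (L : Env S V) (x : V) :
    x ∈ FreeP L (.var x) := by
  induction L with
  | nil => simp [FreeP]
  | cons e K ih =>
    rw [FreeP]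
    split <;> simp [ih]

/-- Req preserves Cpx steps from a variable, provided the variable is selected. -/
theorem cpx_var_req [DecidableEq V] {L₁ : Env S V} {T₁ t : Tm S V}
    (h : Cpx L₁ T₁ t) : ∀ (x : V) (f : Finset V) (L₂ : Env S V),
    T₁ = .var x → x ∈ f → Req f L₁ L₂ → Cpx L₂ T₁ t := by
  induction h
  all_goals intro x f L₂ hT hx hR
  case delta e K =>
    injection hT with hT
    subst hT
    cases hR with
    | skipDecl hy _ => simp only [Entry.name] at hx; exact absurd hx hy
    | skipDefn hy _ => simp only [Entry.name] at hx; exact absurd hx hy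
    | keep e hy hK => exact Cpx.delta e _
  case lift x' t' K e hne hfv h ih =>
    injection hT with hT
    subst hT
    cases hR with
    | skipDecl hy hK => exact Cpx.lift _ hne hfv (ih _ _ _ rfl hx hK)
    | skipDefn hy hK => exact Cpx.lift _ hne hfv (ih _ _ _ rfl hx hK)
    | @keep f' _ _ _ hy hK =>
      refine Cpx.lift _ hne hfv (ih _ _ _ rfl ?_ hK)
      rcases Finset.mem_union.1 hx with h' | h'
      · exact h'
      · exact absurd (Finset.mem_singleton.1 h').symm hne
  all_goals exact absurd hT (by simp)

theorem cpx_req [DecidableEq V] {L₁ : Env S V} {T₁ T₂ : Tm S V}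
    (h : Cpx L₁ T₁ T₂) : ∀ (f : Finset V) (L₂ : Env S V),
    FreeP L₁ T₁ ⊆ f → Req f L₁ L₂ → Cpx L₂ T₁ T₂ := by
  induction h with
  | beta => exact fun _ _ _ _ => Cpx.beta
  | theta => exact fun _ _ _ _ => Cpx.theta
  | delta e K =>
    intro f L₂ hsub hR
    exact cpx_var_req (Cpx.delta e K) e.name f L₂ rfl
      (hsub (mem_freeP_var _ _)) hR
  | zeta hx => exact fun _ _ _ _ => Cpx.zeta hx
  | eps => exact fun _ _ _ _ => Cpx.eps
  | ee => exact fun _ _ _ _ => Cpx.ee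
  | ss s₁ s₂ => exact fun _ _ _ _ => Cpx.ss s₁ s₂
  | @lift x t K e hne hfv h _ =>
    intro f L₂ hsub hR
    exact cpx_var_req (Cpx.lift e hne hfv h) x f L₂ rfl
      (hsub (mem_freeP_var _ _)) hR
  | appL _ ih =>
    intro f L₂ hsub hR
    rw [FreeP] at hsub
    exact Cpx.appL (ih f L₂ (fun a ha => hsub (Finset.mem_union_left _ ha)) hR)
  | appR _ ih =>
    intro f L₂ hsub hR
    rw [FreeP] at hsub
    exact Cpx.appR (ih f L₂ (fun a ha => hsub (Finset.mem_union_right _ ha)) hR)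
  | abstL _ ih =>
    intro f L₂ hsub hR
    rw [FreeP] at hsub
    exact Cpx.abstL (ih f L₂ (fun a ha => hsub (Finset.mem_union_left _ ha)) hR)
  | @abstR x w L t₁ t₂ _ ih =>
    intro f L₂ hsub hR
    rw [FreeP] at hsub
    have hR' : Req (f ∪ {x}) (Entry.decl x w :: L) (Entry.decl x w :: L₂) := by
      have : (f \ {x}) ∪ {x} = f ∪ {x} := Finset.sdiff_union_self_eq_union
      rw [← this]
      exact Req.keep (Entry.decl x w) (by simp [Entry.name]) (req_mono hR Finset.sdiff_subset)
    refine Cpx.abstR (ih (f ∪ {x}) _ ?_ hR')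
    intro a ha
    by_cases hax : a = x
    · simp [hax]
    · exact Finset.mem_union_left _
        (hsub (Finset.mem_union_right _ (by simp [hax, ha])))
  | abbrL _ ih =>
    intro f L₂ hsub hR
    rw [FreeP] at hsub
    exact Cpx.abbrL (ih f L₂ (fun a ha => hsub (Finset.mem_union_left _ ha)) hR)
  | @abbrR x v L t₁ t₂ _ ih =>
    intro f L₂ hsub hR
    rw [FreeP] at hsub
    have hR' : Req (f ∪ {x}) (Entry.defn x v :: L) (Entry.defn x v :: L₂) := by
      have : (f \ {x}) ∪ {x} = f ∪ {x} := Finset.sdiff_union_self_eq_union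
      rw [← this]
      exact Req.keep (Entry.defn x v) (by simp [Entry.name]) (req_mono hR Finset.sdiff_subset)
    refine Cpx.abbrR (ih (f ∪ {x}) _ ?_ hR')
    intro a ha
    by_cases hax : a = x
    · simp [hax]
    · exact Finset.mem_union_left _
        (hsub (Finset.mem_union_right _ (by simp [hax, ha])))
  | castL _ ih =>
    intro f L₂ hsub hR
    rw [FreeP] at hsub
    exact Cpx.castL (ih f L₂ (fun a ha => hsub (Finset.mem_union_left _ ha)) hR)
  | castR _ ih =>
    intro f L₂ hsub hR
    rw [FreeP] at hsub
    exact Cpx.castR (ih f L₂ (fun a ha => hsub (Finset.mem_union_right _ ha)) hR)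

/-- syntactic equivalence on referred entries preserves extended
rt-reduction. -/
theorem stmt_13 {S V : Type} [DecidableEq V] {L₁ L₂ : Env S V} {T₁ T₂ : Tm S V}
    (h₁ : Cpx L₁ T₁ T₂) (h₂ : ReqT T₁ L₁ L₂) : Cpx L₂ T₁ T₂ :=
  cpx_req h₁ _ _ (subset_refl _) h₂
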